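/- arXiv:math/0602452 — 5 statements merged into one kernel-verified Lean document; each statement's English description precedes it below -/
import Mathlib

section
/- Let H be a finite group, A a finite additive abelian group with gcd(|H|, |A|) = 1, and α : H → Aut(A) an action. Then the group homomorphism A → Der_α(H, A) sending a ∈ A to the principal crossed homomorphism h ↦ α(h)(a) − a is surjective, and its kernel is the fixed subgroup A^H = {a ∈ A : α(h)(a) = a for all h ∈ H}; consequently Der_α(H, A) ≅ A / A^H. -/
/-- For an action `α : H → Aut A` of a group `H` on an additive abelian group `A`,
`Der α` is the abelian group (under pointwise addition) of crossed homomorphisms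
`d : H → A`, i.e. maps satisfying `d (h₁ * h₂) = d h₁ + (α h₁).toAdd (d h₂)`. -/
def Der {H A : Type*} [Group H] [AddCommGroup A] (α : H →* Multiplicative (AddAut A)) :
    AddSubgroup (H → A) where
  carrier := {d | ∀ h₁ h₂ : H, d (h₁ * h₂) = d h₁ + (α h₁).toAdd (d h₂)}
  zero_mem' := by intro h₁ h₂; simp
  add_mem' := by
    intro d₁ d₂ hd₁ hd₂ h₁ h₂
    simp only [Pi.add_apply, hd₁ h₁ h₂, hd₂ h₁ h₂, map_add]
    abel
  neg_mem' := by
    intro d hd h₁ h₂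
    simp only [Pi.neg_apply, hd h₁ h₂, map_neg]
    abel

/-- The homomorphism `A → Der_α(H, A)` sending `a` to the principal crossed homomorphism
`h ↦ (α h).toAdd a - a`. -/
def principalDer {H A : Type*} [Group H] [AddCommGroup A] (α : H →* Multiplicative (AddAut A)) :
    A →+ Der α where
  toFun a := ⟨fun h => (α h).toAdd a - a, by
    intro h₁ h₂
    simp only [map_mul, toAdd_mul, AddAut.add_apply, map_sub]
    abel⟩
  map_zero' := by ext h; simp
  map_add' a b := by ext h; simp; abel

/-- The subgroup `A^H` of elements of `A` fixed by all of `H` under the action `α`. -/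
def fixedAddSubgroup {H A : Type*} [Group H] [AddCommGroup A] (α : H →* Multiplicative (AddAut A)) :
    AddSubgroup A where
  carrier := {a | ∀ h : H, (α h).toAdd a = a}
  zero_mem' := by intro h; simp
  add_mem' := by intro a b ha hb h; simp [ha h, hb h]
  neg_mem' := by intro a ha h; simp [ha h]

/-!
Averaging a crossed homomorphism `d` over `H` gives `|H| • d g = s - g • s` with `s = ∑ₕ d h`, so
`|H|` kills `H¹(H, A)`. When `|H| • ·` is bijective on `A`, dividing `s` by `|H|` exhibits `d` as
principal.
-/

section CrossedHom

variable {H A : Type*} [Group H] [AddCommGroup A] (α : H →* Multiplicative (AddAut A))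

@[simp]
theorem principalDer_apply (a : A) (h : H) : (principalDer α a : H → A) h = (α h).toAdd a - a :=
  rfl

theorem ker_principalDer : (principalDer α).ker = fixedAddSubgroup α := by
  ext a
  simp only [AddMonoidHom.mem_ker, Subtype.ext_iff, funext_iff, principalDer_apply,
    ZeroMemClass.coe_zero, Pi.zero_apply, sub_eq_zero]
  rfl

theorem card_nsmul_der_eq_sum_sub [Fintype H] (d : Der α) (g : H) :
    Fintype.card H • (d : H → A) g = ∑ h, (d : H → A) h - (α g).toAdd (∑ h, (d : H → A) h) := by
  have hshift : ∑ h, (d : H → A) (g * h) = ∑ h, (d : H → A) h :=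
    Fintype.sum_equiv (Equiv.mulLeft g) _ _ fun _ => rfl
  simp only [d.2 g, Finset.sum_add_distrib, Finset.sum_const, Finset.card_univ] at hshift
  rw [map_sum]
  exact eq_sub_of_add_eq hshift

theorem principalDer_surjective_of_bijective_nsmul [Fintype H]
    (hbij : Function.Bijective fun a : A => Fintype.card H • a) :
    Function.Surjective (principalDer α) := by
  intro d
  obtain ⟨t, ht⟩ := hbij.2 (∑ h, (d : H → A) h)
  refine ⟨-t, Subtype.ext <| funext fun g => hbij.1 ?_⟩
  change Fintype.card H • ((α g).toAdd (-t) - -t) = Fintype.card H • (d : H → A) g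
  rw [card_nsmul_der_eq_sum_sub, ← ht, map_nsmul, map_neg, smul_sub, smul_neg, smul_neg]
  abel

end CrossedHom

/-- If `H` and `A` are finite with coprime orders, the map sending `a ∈ A` to the principal
crossed homomorphism `h ↦ (α h).toAdd a - a` is a surjection `A → Der_α(H, A)` with kernel the fixed
subgroup `A^H`; consequently `Der_α(H, A) ≅ A / A^H`. -/
theorem principalDer_surjective_ker_fixed {H A : Type*} [Group H] [AddCommGroup A]
    [Fintype H] [Fintype A] (hcop : Nat.Coprime (Fintype.card H) (Fintype.card A))
    (α : H →* Multiplicative (AddAut A)) :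
    Function.Surjective (principalDer α) ∧
      (principalDer α).ker = fixedAddSubgroup α ∧
      Nonempty ((Der α) ≃+ A ⧸ fixedAddSubgroup α) := by
  have hsurj : Function.Surjective (principalDer α) :=
    principalDer_surjective_of_bijective_nsmul α <|
      Nat.Coprime.nsmul_right_bijective (by rw [Nat.card_eq_fintype_card]; exact hcop.symm)
  exact ⟨hsurj, ker_principalDer α,
    ⟨(QuotientAddGroup.quotientKerEquivOfSurjective _ hsurj).symm.trans
      (QuotientAddGroup.quotientAddEquivOfEq (ker_principalDer α))⟩⟩
end

section
/- For every n ≥ 1, the abelianization of T*ₙ is isomorphic to the cyclic group ℤ/3ⁿ. -/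
/-- The quaternion group of order 8, with `i = a 1`, `j = xa 0`, `k = i * j = xa 3`. -/
abbrev Q8 := QuaternionGroup 2

/-- The underlying function of the automorphism of `Q₈` sending `i ↦ j`, `j ↦ k`, `k ↦ i`. -/
def tauFun : Q8 → Q8
  | .a i => if i = 0 then .a 0 else if i = 1 then .xa 0 else if i = 2 then .a 2 else .xa 2
  | .xa i => if i = 0 then .xa 3 else if i = 1 then .a 3 else if i = 2 then .xa 1 else .a 1

/-- The inverse function, sending `i ↦ k`, `j ↦ i`, `k ↦ j`. -/
def tauInvFun : Q8 → Q8
  | .a i => if i = 0 then .a 0 else if i = 1 then .xa 3 else if i = 2 then .a 2 else .xa 1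
  | .xa i => if i = 0 then .a 1 else if i = 1 then .xa 2 else if i = 2 then .a 3 else .xa 0

/-- The automorphism `τ` of `Q₈` with `τ i = j`, `τ j = k`, `τ k = i`. -/
def tau : MulAut Q8 :=
  { toFun := tauFun
    invFun := tauInvFun
    left_inv := by decide
    right_inv := by decide
    map_mul' := by decide }

theorem tau_pow_three : tau ^ 3 = 1 :=
  DFunLike.ext _ _ (by decide)

/-- The action `α : ℤ/3 → Aut Q₈` sending the generator `1` of `ℤ/3` to `τ`. -/
def alphaQ8 : Multiplicative (ZMod 3) →* MulAut Q8 :=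
  AddMonoidHom.toMultiplicativeLeft
    (ZMod.lift 3 ⟨zmultiplesHom (Additive (MulAut Q8)) (Additive.ofMul tau), by
      show ((3 : ℕ) : ℤ) • Additive.ofMul tau = 0
      have h3 : tau ^ ((3 : ℕ) : ℤ) = 1 := by rw [zpow_natCast, tau_pow_three]
      rw [← ofMul_zpow, h3, ofMul_one]⟩)

/-- The reduction map `ℤ/3ⁿ → ℤ/3` (junk when `n = 0`). -/
def redMod3 (n : ℕ) : ZMod (3 ^ n) →+ ZMod 3 :=
  if h : n = 0 then 0
  else (ZMod.castHom (dvd_pow_self 3 h) (ZMod 3)).toAddMonoidHom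

/-- The action `αₙ : ℤ/3ⁿ → Aut Q₈`, the composite of the reduction map `ℤ/3ⁿ → ℤ/3`
with `α`. -/
def alphaQ8n (n : ℕ) : Multiplicative (ZMod (3 ^ n)) →* MulAut Q8 :=
  alphaQ8.comp (AddMonoidHom.toMultiplicative (redMod3 n))

/-- The generalized binary tetrahedral group `T*ₙ = Q₈ ⋊_{αₙ} ℤ/3ⁿ`. -/
abbrev Tstar (n : ℕ) := Q8 ⋊[alphaQ8n n] Multiplicative (ZMod (3 ^ n))
/-
`T*ₙ` is generated by `Q₈` and `ℤ/3ⁿ`, and the projection onto `ℤ/3ⁿ` has abelian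
target, so it suffices that `Q₈` dies in the abelianization. There, conjugation by the generator
of `ℤ/3ⁿ` acts trivially, so the images of `i`, `j`, `k` coincide; since `k = i j`, the common
image `x` satisfies `x = x²`, hence `x = 1`.
-/

namespace SemidirectProduct

open Abelianization

variable {N G : Type*} [Group N]

theorem abelianization_of_inl_aut [Group G] {φ : G →* MulAut N} (g : G) (n : N) :
    of (inl (φ g n) : N ⋊[φ] G) = of (inl n) := by
  rw [inl_aut, map_mul, map_mul, mul_right_comm, ← map_mul of (inr g), ← map_mul inr,
    mul_inv_cancel, map_one, map_one, one_mul]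

def abelianizationEquivRight [CommGroup G] {φ : G →* MulAut N}
    (h : ∀ n : N, of (inl n : N ⋊[φ] G) = 1) : Abelianization (N ⋊[φ] G) ≃* G :=
  MonoidHom.toMulEquiv (Abelianization.lift rightHom) (of.comp inr)
    (by
      refine Abelianization.hom_ext _ _ (MonoidHom.ext fun x => ?_)
      change of (inr (rightHom x)) = of x
      conv_rhs => rw [← inl_left_mul_inr_right x, map_mul, h, one_mul]
      rfl)
    (MonoidHom.ext fun g => by simp)

end SemidirectProduct

theorem Q8.monoidHom_eq_one_of_map_tau {A : Type*} [CommGroup A] (f : Q8 →* A)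
    (hf : ∀ q, f (tau q) = f q) : f = 1 := by
  have hj : f (.xa 0) = f (.a 1) := hf (.a 1)
  have hk : f (.xa 3) = f (.xa 0) := hf (.xa 0)
  have hk_mul : f (.xa 3) = f (.a 1) * f (.xa 0) := by
    rw [← map_mul]
    rfl
  have hi_one : f (.a 1) = 1 := by
    have := hk_mul.symm.trans hk
    rwa [hj, mul_eq_right] at this
  have hj_one : f (.xa 0) = 1 := hj.trans hi_one
  have ha (i : ZMod 4) : f (.a i) = 1 := by
    rw [← ZMod.natCast_zmod_val i, ← QuaternionGroup.a_one_pow, map_pow, hi_one, one_pow]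
  ext (i | i)
  · exact ha i
  · rw [← zero_add i, ← QuaternionGroup.xa_mul_a, map_mul, hj_one, ha, one_mul]
    rfl

theorem alphaQ8n_ofAdd_one {n : ℕ} (hn : n ≠ 0) :
    alphaQ8n n (Multiplicative.ofAdd 1) = tau := by
  have hred : redMod3 n 1 = 1 := by
    rw [redMod3, dif_neg hn]
    exact map_one (ZMod.castHom (dvd_pow_self 3 hn) (ZMod 3))
  change alphaQ8 (Multiplicative.ofAdd (redMod3 n 1)) = tau
  rw [hred]
  rfl

/-- For every n ≥ 1, the abelianization of T*ₙ is isomorphic to ℤ/3ⁿ. -/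
theorem abelianization_Tstar (n : ℕ) (hn : 1 ≤ n) :
    Nonempty (Abelianization (Tstar n) ≃* Multiplicative (ZMod (3 ^ n))) := by
  have hQ8 := Q8.monoidHom_eq_one_of_map_tau
    (Abelianization.of.comp (SemidirectProduct.inl : Q8 →* Tstar n)) fun q => by
      simpa [alphaQ8n_ofAdd_one (Nat.one_le_iff_ne_zero.mp hn)] using
        SemidirectProduct.abelianization_of_inl_aut (φ := alphaQ8n n) (Multiplicative.ofAdd 1) q
  exact ⟨SemidirectProduct.abelianizationEquivRight fun q => DFunLike.congr_fun hQ8 q⟩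
end

section
/- For every n ≥ 1, the center of T*ₙ is isomorphic to ℤ/2 × ℤ/3^(n−1). -/
/-! In a semidirect product `N ⋊ G` with `G` abelian, an element `(q, t)` is central iff `q` is
fixed by the action and commutes with `N` twisted by `t`. When the fixed points of the action are
exactly the center of `N`, this says `q ∈ Z(N)` and `t` acts trivially, so the center is
`Z(N) × ker φ`. For `T*ₙ` the fixed points of `τ` are `Z(Q₈) = {±1} ≅ ℤ/2`, and `ker αₙ` has
index `3` in the cyclic group `ℤ/3ⁿ`, hence is cyclic of order `3ⁿ⁻¹`. -/

namespace SemidirectProduct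

open Subgroup

variable {N G : Type*} [Group N]

section

variable [Group G] {φ : G →* MulAut N}

theorem mem_center_iff {x : N ⋊[φ] G} :
    x ∈ center (N ⋊[φ] G) ↔
      (∀ g, φ g x.left = x.left) ∧ (∀ n, x.left * φ x.right n = n * x.left) ∧
        x.right ∈ center G := by
  rw [Subgroup.mem_center_iff]
  constructor
  · intro h
    refine ⟨fun g => by simpa using congrArg left (h (inr g)), fun n => ?_,
      Subgroup.mem_center_iff.2 fun g => by simpa using congrArg right (h (inr g))⟩
    simpa using (congrArg left (h (inl n))).symm
  · rintro ⟨hfix, hcomm, hG⟩ y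
    ext
    · simp [hfix, hcomm]
    · simp [Subgroup.mem_center_iff.1 hG]

end

variable [CommGroup G] {φ : G →* MulAut N}

theorem mem_center_iff_of_fixedPoints_eq_center
    (hfix : ∀ n : N, (∀ g, φ g n = n) ↔ n ∈ center N) {x : N ⋊[φ] G} :
    x ∈ center (N ⋊[φ] G) ↔ x.left ∈ center N ∧ x.right ∈ φ.ker := by
  rw [mem_center_iff, hfix, MonoidHom.mem_ker, MulEquiv.ext_iff]
  constructor
  · rintro ⟨hx, hcomm, -⟩
    refine ⟨hx, fun n => mul_left_cancel (a := x.left) ?_⟩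
    rw [hcomm, Subgroup.mem_center_iff.1 hx, MulAut.one_apply]
  · rintro ⟨hx, hker⟩
    refine ⟨hx, fun n => ?_, Subgroup.mem_center_iff.2 fun g => mul_comm g x.right⟩
    rw [hker, MulAut.one_apply, Subgroup.mem_center_iff.1 hx]

def centerMulEquivCenterProdKer
    (hfix : ∀ n : N, (∀ g, φ g n = n) ↔ n ∈ center N) :
    center (N ⋊[φ] G) ≃* center N × φ.ker where
  toFun x :=
    have hx := (mem_center_iff_of_fixedPoints_eq_center hfix).1 x.2
    (⟨x.1.left, hx.1⟩, ⟨x.1.right, hx.2⟩)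
  invFun p := ⟨⟨p.1, p.2⟩, (mem_center_iff_of_fixedPoints_eq_center hfix).2 ⟨p.1.2, p.2.2⟩⟩
  left_inv _ := rfl
  right_inv _ := rfl
  map_mul' x y := by
    have hx := (mem_center_iff_of_fixedPoints_eq_center hfix).1 x.2
    ext <;> simp [MonoidHom.mem_ker.1 hx.2]

end SemidirectProduct

open Subgroup

theorem alphaQ8_injective : Function.Injective alphaQ8 :=
  (injective_iff_map_eq_one _).2 fun x hx => by
    have hi : alphaQ8 x (.a 1) = .a 1 := by rw [hx, MulAut.one_apply]
    revert x hi
    decide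

theorem redMod3_surjective {n : ℕ} (hn : n ≠ 0) : Function.Surjective (redMod3 n) := by
  simpa [redMod3, hn] using ZMod.castHom_surjective (dvd_pow_self 3 hn)

theorem redMod3_one {n : ℕ} (hn : n ≠ 0) : redMod3 n 1 = 1 := by
  simp [redMod3, hn]

theorem alphaQ8n_fixed_iff_mem_center {n : ℕ} (hn : n ≠ 0) (q : Q8) :
    (∀ t, alphaQ8n n t q = q) ↔ q ∈ center Q8 := by
  have hcenter : ∀ x q, q ∈ center Q8 → alphaQ8 x q = q := by decide
  have htau : ∀ q, alphaQ8 (.ofAdd 1) q = q → q ∈ center Q8 := by decide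
  refine ⟨fun h => htau q ?_, fun hq t => hcenter _ q hq⟩
  simpa [alphaQ8n, redMod3_one hn] using h (.ofAdd 1)

theorem index_ker_alphaQ8n {n : ℕ} (hn : n ≠ 0) : (alphaQ8n n).ker.index = 3 := by
  rw [Subgroup.index_ker, alphaQ8n, MonoidHom.range_comp,
    MonoidHom.range_eq_top_of_surjective _ (redMod3_surjective hn), ← MonoidHom.range_eq_map,
    ← Nat.card_congr (MonoidHom.ofInjective alphaQ8_injective).toEquiv]
  simp

theorem card_ker_alphaQ8n {n : ℕ} (hn : n ≠ 0) : Nat.card (alphaQ8n n).ker = 3 ^ (n - 1) := by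
  have h := (alphaQ8n n).ker.card_mul_index
  obtain ⟨m, rfl⟩ := Nat.exists_eq_succ_of_ne_zero hn
  simp only [index_ker_alphaQ8n hn, Nat.card_eq_fintype_card (α := Multiplicative _),
    Fintype.card_multiplicative, ZMod.card, pow_succ] at h
  simpa using h

theorem card_center_Q8 : Nat.card (center Q8) = 2 := by
  rw [Nat.card_eq_fintype_card]; decide

/-- For every n ≥ 1, the center of T*ₙ is isomorphic to ℤ/2 × ℤ/3^(n-1). -/
theorem center_Tstar (n : ℕ) (hn : 1 ≤ n) :
    Nonempty ((Subgroup.center (Tstar n)) ≃*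
      Multiplicative (ZMod 2) × Multiplicative (ZMod (3 ^ (n - 1)))) := by
  have hn0 : n ≠ 0 := by omega
  have eQ : center Q8 ≃* Multiplicative (ZMod 2) :=
    mulEquivOfPrimeCardEq card_center_Q8 (by simp)
  have eK : (alphaQ8n n).ker ≃* Multiplicative (ZMod (3 ^ (n - 1))) :=
    mulEquivOfCyclicCardEq ((card_ker_alphaQ8n hn0).trans (by simp))
  exact ⟨(SemidirectProduct.centerMulEquivCenterProdKer
    (alphaQ8n_fixed_iff_mem_center hn0)).trans (eQ.prodCongr eK)⟩
end

section
/- For every n ≥ 1, the abelianization of O*ₙ is isomorphic to the cyclic group ℤ/2. -/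
/-- Generators `X, P, Q, R` of the generalized binary octahedral group. -/
inductive OGen : Type
  | X : OGen
  | P : OGen
  | Q : OGen
  | R : OGen
  deriving DecidableEq

open OGen FreeGroup in
/-- The relations of the generalized binary octahedral group `O*ₙ`:
`X^(3^n) = P⁴ = 1`, `P² = Q² = R²`, `PQP⁻¹ = Q⁻¹`, `XPX⁻¹ = Q`, `XQX⁻¹ = PQ`,
`RXR⁻¹ = X⁻¹`, `RPR⁻¹ = QP`, `RQR⁻¹ = Q⁻¹`. -/
def ostarRels (n : ℕ) : Set (FreeGroup OGen) :=
  { of X ^ 3 ^ n,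
    of P ^ 4,
    of P ^ 2 * (of Q ^ 2)⁻¹,
    of Q ^ 2 * (of R ^ 2)⁻¹,
    of P * of Q * (of P)⁻¹ * of Q,
    of X * of P * (of X)⁻¹ * (of Q)⁻¹,
    of X * of Q * (of X)⁻¹ * (of P * of Q)⁻¹,
    of R * of X * (of R)⁻¹ * of X,
    of R * of P * (of R)⁻¹ * (of Q * of P)⁻¹,
    of R * of Q * (of R)⁻¹ * of Q }

/-- The generalized binary octahedral group `O*ₙ`, given by the presentation above. -/
abbrev Ostar (n : ℕ) := PresentedGroup (ostarRels n)

/-!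
In an abelian quotient of `O*ₙ` the relations `XPX⁻¹ = Q` and `XQX⁻¹ = PQ` become `P = Q` and
`Q = PQ`, so `P = Q = 1`; then `R² = Q² = 1`, and `RXR⁻¹ = X⁻¹` becomes `X² = 1`, which together
with `X^(3^n) = 1` and `gcd(2, 3^n) = 1` gives `X = 1`. Hence the abelianization is generated by
the class of `R`, of order at most `2`; the homomorphism `O*ₙ → ℤ/2` sending `R` to `1` and
`X, P, Q` to `0` shows that the order is exactly `2`.
-/

namespace PresentedGroup

variable {α : Type*} {rels : Set (FreeGroup α)}

@[simp]
theorem mk_of (a : α) : mk rels (FreeGroup.of a) = of a :=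
  rfl

theorem map_mk_of_mem {G : Type*} [Monoid G] (f : PresentedGroup rels →* G) {w : FreeGroup α}
    (hw : w ∈ rels) : f (mk rels w) = 1 := by
  rw [one_of_mem hw, map_one]

end PresentedGroup

open OGen PresentedGroup

namespace Ostar

section CommGroup

variable {n : ℕ} {G : Type*} [CommGroup G] (f : Ostar n →* G)

theorem map_of_P_eq_map_of_Q : f (.of P) = f (.of Q) := by
  have h := map_mk_of_mem f (w := .of X * .of P * (.of X)⁻¹ * (.of Q)⁻¹) (by simp [ostarRels])
  simp only [map_mul, map_inv, mk_of, mul_inv_cancel_comm] at h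
  exact mul_inv_eq_one.mp h

theorem map_of_P : f (.of P) = 1 := by
  have h := map_mk_of_mem f (w := .of X * .of Q * (.of X)⁻¹ * (.of P * .of Q)⁻¹)
    (by simp [ostarRels])
  simp only [map_mul, map_inv, mk_of, mul_inv_cancel_comm, mul_inv_eq_one] at h
  exact right_eq_mul.mp h

theorem map_of_Q : f (.of Q) = 1 := by
  rw [← map_of_P_eq_map_of_Q, map_of_P]

theorem map_of_R_sq : f (.of R) ^ 2 = 1 := by
  have h := map_mk_of_mem f (w := .of Q ^ 2 * (.of R ^ 2)⁻¹) (by simp [ostarRels])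
  simp only [map_mul, map_inv, map_pow, mk_of, mul_inv_eq_one] at h
  rw [← h, map_of_Q, one_pow]

theorem map_of_X : f (.of X) = 1 := by
  have h_sq := map_mk_of_mem f (w := .of R * .of X * (.of R)⁻¹ * .of X) (by simp [ostarRels])
  have h_pow := map_mk_of_mem f (w := .of X ^ 3 ^ n) (by simp [ostarRels])
  simp only [map_mul, map_inv, map_pow, mk_of, mul_inv_cancel_comm] at h_sq h_pow
  have h_coprime : Nat.Coprime 2 (3 ^ n) := Nat.Coprime.pow_right n (by norm_num)
  exact (pow_eq_one_iff_of_coprime h_coprime).mp ⟨by rw [sq, h_sq], h_pow⟩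

end CommGroup

theorem zpowers_abelianization_of_R_eq_top (n : ℕ) :
    Subgroup.zpowers (Abelianization.of (.of R : Ostar n)) = ⊤ := by
  refine eq_top_iff.mpr fun a _ => QuotientGroup.induction_on a fun g => ?_
  refine generated_by _ ((Subgroup.zpowers _).comap Abelianization.of) ?_ g
  rintro (_ | _ | _ | _)
  · simp [map_of_X]
  · simp [map_of_P]
  · simp [map_of_Q]
  · exact Subgroup.mem_zpowers _

end Ostar

def OGen.sign : OGen → Multiplicative (ZMod 2)
  | R => .ofAdd 1
  | _ => 1

theorem OGen.lift_sign_eq_one_of_mem (n : ℕ) : ∀ w ∈ ostarRels n, FreeGroup.lift sign w = 1 := by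
  simp only [ostarRels, Set.mem_insert_iff, Set.mem_singleton_iff]
  rintro w (rfl | rfl | rfl | rfl | rfl | rfl | rfl | rfl | rfl | rfl) <;> simp +decide [sign]

namespace Ostar

def sign (n : ℕ) : Ostar n →* Multiplicative (ZMod 2) :=
  toGroup (OGen.lift_sign_eq_one_of_mem n)

theorem orderOf_abelianization_of_R (n : ℕ) :
    orderOf (Abelianization.of (.of R : Ostar n)) = 2 := by
  refine orderOf_eq_prime (map_of_R_sq _) fun h => ?_
  have h_sign := congrArg (Abelianization.lift (sign n)) h
  simp [sign, toGroup.of, OGen.sign] at h_sign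

theorem card_abelianization (n : ℕ) : Nat.card (Abelianization (Ostar n)) = 2 := by
  rw [← orderOf_abelianization_of_R n, orderOf_eq_card_of_forall_mem_zpowers]
  simp [zpowers_abelianization_of_R_eq_top]

end Ostar

theorem abelianization_Ostar_general (n : ℕ) :
    Nonempty (Abelianization (Ostar n) ≃* Multiplicative (ZMod 2)) :=
  ⟨mulEquivOfPrimeCardEq (Ostar.card_abelianization n) (Nat.card_zmod 2)⟩

/-- For every n ≥ 1, the abelianization of O*ₙ is isomorphic to ℤ/2. -/
theorem abelianization_Ostar (n : ℕ) (hn : 1 ≤ n) :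
    Nonempty (Abelianization (Ostar n) ≃* Multiplicative (ZMod 2)) :=
  abelianization_Ostar_general n
end

section
/- For every n ≥ 1, the center of O*ₙ is isomorphic to the cyclic group ℤ/2. -/
/-!
`Z = P²` is central: it is a power of `P`, of `Q` and of `R`, and `X` conjugates it to `Q² = Z`.
It is nontrivial because `P²` maps to `-1` under a representation in `SL₂(𝔽₇)`.

Conversely, `P` and `Q` generate a quaternion subgroup `H = {Pⁱ, PⁱQ}` normalized by `X`, so every
element is `Xᵏh` or `XᵏhR` with `h ∈ H`. Killing `H` maps `O*ₙ` onto the dihedral group of order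
`2·3ⁿ`, whose center is trivial as `3ⁿ` is odd and `> 1`; hence a central element lies in `H`.
Finally `PⁱQ` does not commute with `P`, and `P` does not commute with `R` (as `RPR⁻¹ = QP`), which
leaves `1` and `Z`.
-/

namespace Subgroup

variable {G : Type*} [Group G]

@[elab_as_elim]
theorem closure_induction_right_of_isOfFinOrder {S : Set G} {motive : G → Prop}
    (fin_order : ∀ s ∈ S, IsOfFinOrder s) (one : motive 1)
    (mul_right : ∀ g, ∀ s ∈ S, motive g → motive (g * s)) {g : G} (hg : g ∈ closure S) :
    motive g := by
  rw [← mem_toSubmonoid, closure_toSubmonoid_of_isOfFinOrder fin_order] at hg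
  induction hg using Submonoid.closure_induction_right with
  | one => exact one
  | mul_right g _ s hs ih => exact mul_right g s hs ih

theorem conj_mem_closure {S : Set G} {g : G} (hS : ∀ s ∈ S, g * s * g⁻¹ ∈ closure S) {a : G}
    (ha : a ∈ closure S) : g * a * g⁻¹ ∈ closure S :=
  (closure_le ((closure S).comap (MulAut.conj g).toMonoidHom)).2 hS ha

end Subgroup

theorem MonoidHom.map_mem_center {G H : Type*} [Group G] [Group H] (f : G →* H)
    (hf : Function.Surjective f) {g : G} (hg : g ∈ Subgroup.center G) :
    f g ∈ Subgroup.center H := by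
  rw [Subgroup.mem_center_iff] at hg ⊢
  intro h
  obtain ⟨a, rfl⟩ := hf h
  rw [← map_mul, ← map_mul, hg]

namespace Ostar

open Subgroup

variable {n : ℕ}

def X (n : ℕ) : Ostar n := PresentedGroup.of OGen.X
def P (n : ℕ) : Ostar n := PresentedGroup.of OGen.P
def Q (n : ℕ) : Ostar n := PresentedGroup.of OGen.Q
def R (n : ℕ) : Ostar n := PresentedGroup.of OGen.R

abbrev generators (n : ℕ) : Set (Ostar n) := {X n, P n, Q n, R n}

section Relations

open FreeGroup

theorem X_pow_three_pow : X n ^ 3 ^ n = 1 :=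
  PresentedGroup.one_of_mem (x := of OGen.X ^ 3 ^ n) (by simp [ostarRels])

theorem P_pow_four : P n ^ 4 = 1 :=
  PresentedGroup.one_of_mem (x := of OGen.P ^ 4) (by simp [ostarRels])

theorem P_sq_eq_Q_sq : P n ^ 2 = Q n ^ 2 :=
  PresentedGroup.mk_eq_mk_of_mul_inv_mem (x := of OGen.P ^ 2) (by simp [ostarRels])

theorem Q_sq_eq_R_sq : Q n ^ 2 = R n ^ 2 :=
  PresentedGroup.mk_eq_mk_of_mul_inv_mem (x := of OGen.Q ^ 2) (by simp [ostarRels])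

theorem P_mul_Q_mul_P_inv : P n * Q n * (P n)⁻¹ = (Q n)⁻¹ :=
  PresentedGroup.mk_eq_mk_of_mul_inv_mem (x := of OGen.P * of OGen.Q * (of OGen.P)⁻¹)
    (y := (of OGen.Q)⁻¹) (by simp [ostarRels])

theorem X_mul_P_mul_X_inv : X n * P n * (X n)⁻¹ = Q n :=
  PresentedGroup.mk_eq_mk_of_mul_inv_mem (x := of OGen.X * of OGen.P * (of OGen.X)⁻¹)
    (by simp [ostarRels])

theorem X_mul_Q_mul_X_inv : X n * Q n * (X n)⁻¹ = P n * Q n :=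
  PresentedGroup.mk_eq_mk_of_mul_inv_mem (x := of OGen.X * of OGen.Q * (of OGen.X)⁻¹)
    (by simp [ostarRels])

theorem R_mul_X_mul_R_inv : R n * X n * (R n)⁻¹ = (X n)⁻¹ :=
  PresentedGroup.mk_eq_mk_of_mul_inv_mem (x := of OGen.R * of OGen.X * (of OGen.R)⁻¹)
    (y := (of OGen.X)⁻¹) (by simp [ostarRels])

theorem R_mul_P_mul_R_inv : R n * P n * (R n)⁻¹ = Q n * P n :=
  PresentedGroup.mk_eq_mk_of_mul_inv_mem (x := of OGen.R * of OGen.P * (of OGen.R)⁻¹)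
    (by simp [ostarRels])

theorem R_mul_Q_mul_R_inv : R n * Q n * (R n)⁻¹ = (Q n)⁻¹ :=
  PresentedGroup.mk_eq_mk_of_mul_inv_mem (x := of OGen.R * of OGen.Q * (of OGen.R)⁻¹)
    (y := (of OGen.Q)⁻¹) (by simp [ostarRels])

end Relations

theorem Q_pow_four : Q n ^ 4 = 1 := by
  rw [show 4 = 2 * 2 from rfl, pow_mul, ← P_sq_eq_Q_sq, ← pow_mul, P_pow_four]

theorem R_pow_four : R n ^ 4 = 1 := by
  rw [show 4 = 2 * 2 from rfl, pow_mul, ← Q_sq_eq_R_sq, ← pow_mul, Q_pow_four]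

theorem Q_inv : (Q n)⁻¹ = P n ^ 2 * Q n := by
  rw [inv_eq_iff_mul_eq_one, P_sq_eq_Q_sq, ← pow_succ, ← pow_succ', Q_pow_four]

theorem Q_mul_P : Q n * P n = P n ^ 3 * Q n :=
  calc Q n * P n = (P n * Q n * (P n)⁻¹)⁻¹ * P n := by rw [P_mul_Q_mul_P_inv, inv_inv]
    _ = P n * (Q n)⁻¹ := by group
    _ = P n ^ 3 * Q n := by rw [Q_inv, ← mul_assoc, ← pow_succ']

theorem R_mul_X : R n * X n = (X n)⁻¹ * R n := mul_inv_eq_iff_eq_mul.1 R_mul_X_mul_R_inv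
theorem R_mul_P : R n * P n = Q n * P n * R n := mul_inv_eq_iff_eq_mul.1 R_mul_P_mul_R_inv
theorem R_mul_Q : R n * Q n = (Q n)⁻¹ * R n := mul_inv_eq_iff_eq_mul.1 R_mul_Q_mul_R_inv

theorem closure_generators : closure (generators n) = ⊤ := by
  rw [← PresentedGroup.closure_range_of]
  congr 1
  ext g
  constructor
  · rintro (rfl | rfl | rfl | rfl) <;> exact ⟨_, rfl⟩
  · rintro ⟨s, rfl⟩
    cases s <;> simp [X, P, Q, R]

theorem isOfFinOrder_of_mem_generators {s : Ostar n} (hs : s ∈ generators n) :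
    IsOfFinOrder s := by
  rw [isOfFinOrder_iff_pow_eq_one]
  rcases hs with rfl | rfl | rfl | rfl
  · exact ⟨3 ^ n, by positivity, X_pow_three_pow⟩
  · exact ⟨4, by norm_num, P_pow_four⟩
  · exact ⟨4, by norm_num, Q_pow_four⟩
  · exact ⟨4, by norm_num, R_pow_four⟩

def Z (n : ℕ) : Ostar n := P n ^ 2

theorem Z_mem_center : Z n ∈ center (Ostar n) := by
  rw [center_eq_iInf closure_generators]
  simp only [mem_iInf, Set.mem_insert_iff, Set.mem_singleton_iff, mem_centralizer_singleton_iff]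
  rintro s (rfl | rfl | rfl | rfl)
  · have h : X n * Z n * (X n)⁻¹ = Z n := by
      rw [Z, ← conj_pow, X_mul_P_mul_X_inv, P_sq_eq_Q_sq]
    exact (mul_inv_eq_iff_eq_mul.1 h).symm
  · exact (Commute.self_pow _ _).symm.eq
  · rw [Z, P_sq_eq_Q_sq]; exact (Commute.self_pow _ _).symm.eq
  · rw [Z, P_sq_eq_Q_sq, Q_sq_eq_R_sq]; exact (Commute.self_pow _ _).symm.eq

/-- A representation of the binary octahedral group `O*₁` in `SL₂(𝔽₇)`: the image of `X` has
order 3, and the image of `P` squares to `-1`. -/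
def glGen : OGen → GL (Fin 2) (ZMod 7)
  | .X => ⟨!![0, 1; 6, 6], !![6, 6; 1, 0], by decide, by decide⟩
  | .P => ⟨!![0, 2; 3, 0], !![0, 5; 4, 0], by decide, by decide⟩
  | .Q => ⟨!![4, 4; 1, 3], !![3, 3; 6, 4], by decide, by decide⟩
  | .R => ⟨!![3, 6; 3, 4], !![4, 1; 4, 3], by decide, by decide⟩

def toGL (hn : 1 ≤ n) : Ostar n →* GL (Fin 2) (ZMod 7) :=
  PresentedGroup.toGroup (f := glGen) (by
    have hX : glGen .X ^ 3 ^ n = 1 := by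
      obtain ⟨m, rfl⟩ := Nat.exists_eq_add_of_le' hn
      rw [pow_succ, pow_mul', show glGen .X ^ 3 = 1 by decide, one_pow]
    simp only [ostarRels, Set.mem_insert_iff, Set.mem_singleton_iff, forall_eq_or_imp, forall_eq,
      map_mul, map_pow, map_inv, FreeGroup.lift_apply_of]
    exact ⟨hX, by decide⟩)

theorem toGL_of (hn : 1 ≤ n) (s : OGen) : toGL hn (PresentedGroup.of s) = glGen s :=
  PresentedGroup.toGroup.of _

theorem Z_ne_one (hn : 1 ≤ n) : Z n ≠ 1 := by
  intro h
  have h' := congrArg (toGL hn) h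
  rw [Z, map_pow, P, toGL_of, map_one] at h'
  exact absurd h' (by decide)

theorem P_not_mem_center (hn : 1 ≤ n) : P n ∉ center (Ostar n) := by
  intro hP
  have hQ : Q n = 1 := by
    have h := R_mul_P (n := n)
    rwa [mem_center_iff.1 hP (R n), mul_left_inj, right_eq_mul] at h
  exact Z_ne_one hn (by rw [Z, P_sq_eq_Q_sq, hQ, one_pow])

theorem P_pow_mul_Q_not_mem_center (hn : 1 ≤ n) (i : ℕ) : P n ^ i * Q n ∉ center (Ostar n) := by
  intro hc
  have h : P n ^ (i + 1) * Q n = P n ^ (i + 1) * P n ^ 2 * Q n :=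
    calc P n ^ (i + 1) * Q n = P n * (P n ^ i * Q n) := by rw [pow_succ', mul_assoc]
      _ = P n ^ i * (Q n * P n) := by rw [mem_center_iff.1 hc (P n), mul_assoc]
      _ = P n ^ (i + 1) * P n ^ 2 * Q n := by rw [Q_mul_P, ← mul_assoc, ← pow_add, ← pow_add]
  exact Z_ne_one hn (left_eq_mul.1 (mul_right_cancel h))

abbrev quaternionSubgroup (n : ℕ) : Subgroup (Ostar n) := closure {P n, Q n}

theorem P_mem_quaternionSubgroup : P n ∈ quaternionSubgroup n := subset_closure (by simp)
theorem Q_mem_quaternionSubgroup : Q n ∈ quaternionSubgroup n := subset_closure (by simp)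

theorem exists_eq_P_pow_of_mem_quaternionSubgroup {h : Ostar n}
    (hh : h ∈ quaternionSubgroup n) : ∃ i : ℕ, h = P n ^ i ∨ h = P n ^ i * Q n := by
  refine closure_induction_right_of_isOfFinOrder ?_ ⟨0, Or.inl (pow_zero _).symm⟩ ?_ hh
  · rintro s (rfl | rfl) <;> apply isOfFinOrder_of_mem_generators <;> simp
  · rintro h s hs ⟨i, rfl | rfl⟩ <;> obtain rfl | rfl := hs
    · exact ⟨i + 1, Or.inl (pow_succ _ _).symm⟩
    · exact ⟨i, Or.inr rfl⟩
    · exact ⟨i + 3, Or.inr (by rw [mul_assoc, Q_mul_P, ← mul_assoc, ← pow_add])⟩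
    · exact ⟨i + 2, Or.inl (by rw [mul_assoc, ← sq, ← P_sq_eq_Q_sq, ← pow_add])⟩

theorem conj_X_mem_quaternionSubgroup {h : Ostar n} (hh : h ∈ quaternionSubgroup n) :
    X n * h * (X n)⁻¹ ∈ quaternionSubgroup n := by
  refine conj_mem_closure (fun s hs => ?_) hh
  obtain rfl | rfl := hs
  · rw [X_mul_P_mul_X_inv]; exact Q_mem_quaternionSubgroup
  · rw [X_mul_Q_mul_X_inv]; exact mul_mem P_mem_quaternionSubgroup Q_mem_quaternionSubgroup

theorem conj_X_inv_mem_quaternionSubgroup {h : Ostar n} (hh : h ∈ quaternionSubgroup n) :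
    (X n)⁻¹ * h * X n ∈ quaternionSubgroup n := by
  have hQ : (X n)⁻¹ * Q n * X n = P n := by rw [← X_mul_P_mul_X_inv]; group
  have hPQ : (X n)⁻¹ * (P n * Q n) * X n = Q n := by rw [← X_mul_Q_mul_X_inv]; group
  have hP : (X n)⁻¹ * P n * X n = Q n * (P n)⁻¹ :=
    calc (X n)⁻¹ * P n * X n
        = ((X n)⁻¹ * (P n * Q n) * X n) * ((X n)⁻¹ * Q n * X n)⁻¹ := by group
      _ = Q n * (P n)⁻¹ := by rw [hPQ, hQ]
  have key := conj_mem_closure (g := (X n)⁻¹) (S := {P n, Q n}) ?_ hh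
  · rwa [inv_inv] at key
  rintro s (rfl | rfl)
  · rw [inv_inv, hP]
    exact mul_mem Q_mem_quaternionSubgroup (inv_mem P_mem_quaternionSubgroup)
  · rw [inv_inv, hQ]
    exact P_mem_quaternionSubgroup

theorem exists_eq_X_zpow_mul (g : Ostar n) :
    ∃ k : ℤ, ∃ h ∈ quaternionSubgroup n, g = X n ^ k * h ∨ g = X n ^ k * h * R n := by
  have hg : g ∈ closure (generators n) := by simp [closure_generators]
  refine closure_induction_right_of_isOfFinOrder (fun s => isOfFinOrder_of_mem_generators)
    ⟨0, 1, one_mem _, Or.inl (by simp)⟩ ?_ hg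
  rintro g s (rfl | rfl | rfl | rfl) ⟨k, h, hh, rfl | rfl⟩
  · exact ⟨k + 1, _, conj_X_inv_mem_quaternionSubgroup hh, Or.inl (by group)⟩
  · refine ⟨k - 1, _, conj_X_mem_quaternionSubgroup hh, Or.inr ?_⟩
    rw [mul_assoc, R_mul_X]; group
  · exact ⟨k, _, mul_mem hh P_mem_quaternionSubgroup, Or.inl (mul_assoc _ _ _)⟩
  · refine ⟨k, h * (Q n * P n),
      mul_mem hh (mul_mem Q_mem_quaternionSubgroup P_mem_quaternionSubgroup), Or.inr ?_⟩
    rw [mul_assoc, R_mul_P]; group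
  · exact ⟨k, _, mul_mem hh Q_mem_quaternionSubgroup, Or.inl (mul_assoc _ _ _)⟩
  · refine ⟨k, h * (Q n)⁻¹, mul_mem hh (inv_mem Q_mem_quaternionSubgroup), Or.inr ?_⟩
    rw [mul_assoc, R_mul_Q]; group
  · exact ⟨k, h, hh, Or.inr rfl⟩
  · refine ⟨k, h * Z n, mul_mem hh (pow_mem P_mem_quaternionSubgroup 2), Or.inl ?_⟩
    rw [Z, P_sq_eq_Q_sq, Q_sq_eq_R_sq, mul_assoc, ← sq, mul_assoc]

open DihedralGroup in
def toDihedral (n : ℕ) : Ostar n →* DihedralGroup (3 ^ n) :=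
  PresentedGroup.toGroup (f := fun | .X => r 1 | .P => 1 | .Q => 1 | .R => sr 0) (by
    simp only [ostarRels, Set.mem_insert_iff, Set.mem_singleton_iff, forall_eq_or_imp, forall_eq,
      map_mul, map_pow, map_inv, FreeGroup.lift_apply_of]
    refine ⟨by simp, ?_⟩
    simp [sq, sr_mul_r, sr_mul_sr, inv_sr, inv_r, r_mul_r])

theorem toDihedral_X : toDihedral n (X n) = .r 1 := PresentedGroup.toGroup.of _
theorem toDihedral_R : toDihedral n (R n) = .sr 0 := PresentedGroup.toGroup.of _

theorem quaternionSubgroup_le_ker : quaternionSubgroup n ≤ (toDihedral n).ker := by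
  rw [closure_le]
  rintro s (rfl | rfl) <;> exact PresentedGroup.toGroup.of _

theorem toDihedral_surjective : Function.Surjective (toDihedral n) := by
  rintro (i | i)
  · exact ⟨X n ^ i.val, by simp [toDihedral_X]⟩
  · exact ⟨X n ^ (-i).val * R n, by simp [toDihedral_X, toDihedral_R, DihedralGroup.r_mul_sr]⟩

theorem mem_quaternionSubgroup_of_mem_center (hn : 1 ≤ n) {g : Ostar n}
    (hg : g ∈ center (Ostar n)) : g ∈ quaternionSubgroup n := by
  have hodd : Odd (3 ^ n) := Odd.pow (by decide)
  have hne : 3 ^ n ≠ 1 := (Nat.one_lt_pow (by omega) (by norm_num)).ne'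
  have hg1 : toDihedral n g = 1 := by
    simpa [DihedralGroup.center_eq_bot_of_odd_ne_one hodd hne] using
      (toDihedral n).map_mem_center toDihedral_surjective hg
  obtain ⟨k, h, hh, rfl | rfl⟩ := exists_eq_X_zpow_mul g
  all_goals have hh1 : toDihedral n h = 1 := quaternionSubgroup_le_ker hh
  · have hk : (k : ZMod (3 ^ n)) = 0 := by
      simpa [toDihedral_X, hh1, DihedralGroup.one_def, -DihedralGroup.r_zero] using hg1
    obtain ⟨m, rfl⟩ := (ZMod.intCast_zmod_eq_zero_iff_dvd k (3 ^ n)).1 hk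
    rwa [zpow_mul, zpow_natCast, X_pow_three_pow, one_zpow, one_mul]
  · simp [toDihedral_X, toDihedral_R, hh1, DihedralGroup.r_mul_sr, DihedralGroup.one_def,
      -DihedralGroup.r_zero] at hg1

theorem eq_one_or_eq_Z_of_mem_center (hn : 1 ≤ n) {g : Ostar n} (hg : g ∈ center (Ostar n)) :
    g = 1 ∨ g = Z n := by
  obtain ⟨i, rfl | rfl⟩ :=
    exists_eq_P_pow_of_mem_quaternionSubgroup (mem_quaternionSubgroup_of_mem_center hn hg)
  · rw [pow_eq_pow_mod i P_pow_four] at hg ⊢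
    have hi : i % 4 < 4 := Nat.mod_lt _ (by norm_num)
    interval_cases i % 4
    · exact Or.inl (pow_zero _)
    · exact (P_not_mem_center hn (by rwa [pow_one] at hg)).elim
    · exact Or.inr rfl
    · have hinv : (P n ^ 3)⁻¹ = P n :=
        inv_eq_of_mul_eq_one_right (by rw [← pow_succ, P_pow_four])
      exact (P_not_mem_center hn (hinv ▸ inv_mem hg)).elim
  · exact (P_pow_mul_Q_not_mem_center hn i hg).elim

theorem coe_center (hn : 1 ≤ n) : (center (Ostar n) : Set (Ostar n)) = {1, Z n} := by
  refine Set.Subset.antisymm (fun g hg => eq_one_or_eq_Z_of_mem_center hn hg) ?_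
  rintro _ (rfl | rfl)
  exacts [one_mem _, Z_mem_center]

end Ostar

/-- For every n ≥ 1, the center of O*ₙ is isomorphic to ℤ/2. -/
theorem center_Ostar (n : ℕ) (hn : 1 ≤ n) :
    Nonempty ((Subgroup.center (Ostar n)) ≃* Multiplicative (ZMod 2)) := by
  have hcard : Nat.card (Subgroup.center (Ostar n)) = 2 := by
    rw [← SetLike.coe_sort_coe, Nat.card_coe_set_eq, Ostar.coe_center hn,
      Set.ncard_pair (Ostar.Z_ne_one hn).symm]
  exact ⟨mulEquivOfPrimeCardEq hcard (by simp)⟩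
end
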